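/- arXiv:2503.09309 — 2 statements merged into one kernel-verified Lean document; each statement's English description precedes it below -/
import Mathlib

section
/- For any finite-horizon MDP with transition kernels P_h and any two Markov policies π, π̃, the total variation distance between their occupancy measures satisfies ‖μ^π − μ^{π̃}‖₁ := Σ_{h=1}^H Σ_{s,a} |μ^π_h(s,a) − μ^{π̃}_h(s,a)| ≤ H · Σ_{h=1}^H Σ_s d^π_h(s) ‖π_h(·|s) − π̃_h(·|s)‖₁, where d^π_h(s) = Σ_a μ^π_h(s,a) is the state marginal of μ^π at step h. -/
open Finset

def IsPolicy {S A : Type*} [Fintype A] (π : ℕ → S → A → ℝ) : Prop :=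
  ∀ h s, (∀ a, 0 ≤ π h s a) ∧ ∑ a, π h s a = 1

def IsKernel {S A : Type*} [Fintype S] (P : ℕ → S → A → S → ℝ) : Prop :=
  ∀ h s a, (∀ s', 0 ≤ P h s a s') ∧ ∑ s', P h s a s' = 1

def IsProb {S : Type*} [Fintype S] (μ₁ : S → ℝ) : Prop :=
  (∀ s, 0 ≤ μ₁ s) ∧ ∑ s, μ₁ s = 1

noncomputable def occ {S A : Type*} [Fintype S] [Fintype A] (μ₁ : S → ℝ)
    (P : ℕ → S → A → S → ℝ) (π : ℕ → S → A → ℝ) : ℕ → S → A → ℝ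
  | 0 => fun s a => μ₁ s * π 0 s a
  | (h+1) => fun s a => π (h+1) s a * ∑ s', ∑ a', P h s' a' s * occ μ₁ P π h s' a'


/-!
Write `d_h(s)` for the mass arriving at `s` at step `h` (`μ₁` at the first step, the push-forward
of `μ^π_{h-1}` through `P_{h-1}` afterwards), so that `μ^π_h(s,a) = π_h(a|s) d_h(s)`. Splitting
`π_h d_h - π̃_h d̃_h = (π_h - π̃_h) d_h + π̃_h (d_h - d̃_h)` bounds the error at step `h` by the
policy mismatch at step `h` plus `‖d_h - d̃_h‖₁`, and a stochastic kernel does not increase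
`ℓ¹` distances, so `‖d_h - d̃_h‖₁ ≤ ‖μ^π_{h-1} - μ^{π̃}_{h-1}‖₁`. Hence the error at step `h` is at
most the sum of the mismatches at steps `≤ h`, and summing over `h < H` gives the factor `H`.
-/

theorem sum_abs_sum_mul_le_sum_abs {ι κ : Type*} [Fintype ι] [Fintype κ] {K : ι → κ → ℝ}
    (hK₀ : ∀ i k, 0 ≤ K i k) (hK₁ : ∀ i, ∑ k, K i k = 1) (f : ι → ℝ) :
    ∑ k, |∑ i, K i k * f i| ≤ ∑ i, |f i| :=
  calc ∑ k, |∑ i, K i k * f i|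
      ≤ ∑ k, ∑ i, K i k * |f i| := sum_le_sum fun k _ =>
        (abs_sum_le_sum_abs _ _).trans_eq <|
          sum_congr rfl fun i _ => by rw [abs_mul, abs_of_nonneg (hK₀ i k)]
    _ = ∑ i, |f i| := by
        rw [sum_comm]
        simp_rw [← sum_mul, hK₁, one_mul]

theorem sum_abs_mul_sub_mul_le {α : Type*} [Fintype α] (p : α → ℝ) {q : α → ℝ}
    (hq₀ : ∀ a, 0 ≤ q a) (hq₁ : ∑ a, q a = 1) {x : ℝ} (hx : 0 ≤ x) (y : ℝ) :
    ∑ a, |p a * x - q a * y| ≤ x * ∑ a, |p a - q a| + |x - y| :=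
  calc ∑ a, |p a * x - q a * y|
      ≤ ∑ a, (|p a - q a| * x + q a * |x - y|) := sum_le_sum fun a _ => by
        have hsplit : p a * x - q a * y = (p a - q a) * x + q a * (x - y) := by ring
        rw [hsplit]
        refine (abs_add_le _ _).trans_eq ?_
        rw [abs_mul, abs_mul, abs_of_nonneg hx, abs_of_nonneg (hq₀ a)]
    _ = x * ∑ a, |p a - q a| + |x - y| := by
        rw [sum_add_distrib, ← sum_mul, ← sum_mul, hq₁, one_mul, mul_comm]

theorem sum_range_le_mul_sum_range {a e : ℕ → ℝ} (he : ∀ k, 0 ≤ e k)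
    (hae : ∀ h, a h ≤ ∑ k ∈ range (h + 1), e k) (H : ℕ) :
    ∑ h ∈ range H, a h ≤ H * ∑ h ∈ range H, e h :=
  calc ∑ h ∈ range H, a h
      ≤ ∑ h ∈ range H, ∑ k ∈ range (h + 1), e k := sum_le_sum fun h _ => hae h
    _ ≤ ∑ _h ∈ range H, ∑ k ∈ range H, e k := sum_le_sum fun h hh =>
        sum_le_sum_of_subset_of_nonneg (range_subset_range.mpr (mem_range.mp hh))
          fun k _ _ => he k
    _ = H * ∑ h ∈ range H, e h := by rw [sum_const, card_range, nsmul_eq_mul]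

section Occupancy

variable {S A : Type*} [Fintype S] [Fintype A] (μ₁ : S → ℝ) (P : ℕ → S → A → S → ℝ)
  (π : ℕ → S → A → ℝ)

noncomputable def stateOcc : ℕ → S → ℝ
  | 0 => μ₁
  | h + 1 => fun s => ∑ s', ∑ a', P h s' a' s * occ μ₁ P π h s' a'

theorem occ_eq_mul_stateOcc (h : ℕ) (s : S) (a : A) :
    occ μ₁ P π h s a = π h s a * stateOcc μ₁ P π h s := by
  cases h with
  | zero => exact mul_comm _ _
  | succ h => rfl

theorem sum_occ_eq_stateOcc {π : ℕ → S → A → ℝ} (hπ : IsPolicy π) (h : ℕ) (s : S) :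
    ∑ a, occ μ₁ P π h s a = stateOcc μ₁ P π h s := by
  simp_rw [occ_eq_mul_stateOcc, ← sum_mul, (hπ h s).2, one_mul]

variable {μ₁ P π}

theorem occ_nonneg (hμ₁ : IsProb μ₁) (hP : IsKernel P) (hπ : IsPolicy π) (h : ℕ) (s : S)
    (a : A) : 0 ≤ occ μ₁ P π h s a := by
  induction h generalizing s a with
  | zero => exact mul_nonneg (hμ₁.1 s) ((hπ 0 s).1 a)
  | succ h ih =>
    exact mul_nonneg ((hπ (h + 1) s).1 a) <| sum_nonneg fun s' _ => sum_nonneg fun a' _ =>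
      mul_nonneg ((hP h s' a').1 s) (ih s' a')

theorem stateOcc_nonneg (hμ₁ : IsProb μ₁) (hP : IsKernel P) (hπ : IsPolicy π) (h : ℕ)
    (s : S) : 0 ≤ stateOcc μ₁ P π h s := by
  cases h with
  | zero => exact hμ₁.1 s
  | succ h => exact sum_nonneg fun s' _ => sum_nonneg fun a' _ =>
      mul_nonneg ((hP h s' a').1 s) (occ_nonneg hμ₁ hP hπ h s' a')

theorem sum_abs_stateOcc_succ_sub_le (hP : IsKernel P) (π' : ℕ → S → A → ℝ) (h : ℕ) :
    ∑ s, |stateOcc μ₁ P π (h + 1) s - stateOcc μ₁ P π' (h + 1) s| ≤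
      ∑ s, ∑ a, |occ μ₁ P π h s a - occ μ₁ P π' h s a| := by
  have hdiff : ∀ s, stateOcc μ₁ P π (h + 1) s - stateOcc μ₁ P π' (h + 1) s =
      ∑ p : S × A, P h p.1 p.2 s * (occ μ₁ P π h p.1 p.2 - occ μ₁ P π' h p.1 p.2) := by
    intro s
    simp only [stateOcc, mul_sub, sum_sub_distrib, Fintype.sum_prod_type]
  simp_rw [hdiff]
  refine (sum_abs_sum_mul_le_sum_abs (fun (p : S × A) s => (hP h p.1 p.2).1 s)
    (fun p => (hP h p.1 p.2).2) _).trans_eq ?_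
  rw [Fintype.sum_prod_type]

theorem sum_abs_occ_sub_le (hμ₁ : IsProb μ₁) (hP : IsKernel P) (hπ : IsPolicy π)
    {π' : ℕ → S → A → ℝ} (hπ' : IsPolicy π') (h : ℕ) :
    ∑ s, ∑ a, |occ μ₁ P π h s a - occ μ₁ P π' h s a| ≤
      ∑ s, (∑ a, occ μ₁ P π h s a) * (∑ a, |π h s a - π' h s a|) +
        ∑ s, |stateOcc μ₁ P π h s - stateOcc μ₁ P π' h s| := by
  calc ∑ s, ∑ a, |occ μ₁ P π h s a - occ μ₁ P π' h s a|
      = ∑ s, ∑ a, |π h s a * stateOcc μ₁ P π h s - π' h s a * stateOcc μ₁ P π' h s| := by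
        simp_rw [occ_eq_mul_stateOcc]
    _ ≤ ∑ s, (stateOcc μ₁ P π h s * ∑ a, |π h s a - π' h s a| +
          |stateOcc μ₁ P π h s - stateOcc μ₁ P π' h s|) := sum_le_sum fun s _ =>
        sum_abs_mul_sub_mul_le _ (hπ' h s).1 (hπ' h s).2 (stateOcc_nonneg hμ₁ hP hπ h s) _
    _ = _ := by rw [sum_add_distrib]; simp_rw [sum_occ_eq_stateOcc μ₁ P hπ]

theorem sum_abs_occ_sub_le_sum_range (hμ₁ : IsProb μ₁) (hP : IsKernel P) (hπ : IsPolicy π)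
    {π' : ℕ → S → A → ℝ} (hπ' : IsPolicy π') (h : ℕ) :
    ∑ s, ∑ a, |occ μ₁ P π h s a - occ μ₁ P π' h s a| ≤
      ∑ k ∈ range (h + 1), ∑ s, (∑ a, occ μ₁ P π k s a) * (∑ a, |π k s a - π' k s a|) := by
  induction h with
  | zero => simpa [stateOcc] using sum_abs_occ_sub_le hμ₁ hP hπ hπ' 0
  | succ h ih =>
    rw [sum_range_succ, add_comm (∑ k ∈ range (h + 1), _)]
    exact (sum_abs_occ_sub_le hμ₁ hP hπ hπ' (h + 1)).trans <|
      add_le_add_right ((sum_abs_stateOcc_succ_sub_le hP π' h).trans ih) _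

end Occupancy

/-- `‖μ^π − μ^π̃‖₁ ≤ H · Σ_h Σ_s d^π_h(s) ‖π_h(·|s) − π̃_h(·|s)‖₁`. -/
theorem stmt1 {S A : Type*} [Fintype S] [Fintype A]
    (H : ℕ) (μ₁ : S → ℝ) (hμ₁ : IsProb μ₁)
    (P : ℕ → S → A → S → ℝ) (hP : IsKernel P)
    (π π' : ℕ → S → A → ℝ) (hπ : IsPolicy π) (hπ' : IsPolicy π') :
    ∑ h ∈ Finset.range H, ∑ s, ∑ a, |occ μ₁ P π h s a - occ μ₁ P π' h s a| ≤
      (H : ℝ) * ∑ h ∈ Finset.range H, ∑ s,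
        (∑ a, occ μ₁ P π h s a) * (∑ a, |π h s a - π' h s a|) := by
  have hmismatch_nonneg : ∀ k,
      0 ≤ ∑ s, (∑ a, occ μ₁ P π k s a) * (∑ a, |π k s a - π' k s a|) := fun k =>
    sum_nonneg fun s _ => mul_nonneg (sum_nonneg fun a _ => occ_nonneg hμ₁ hP hπ k s a)
      (sum_nonneg fun a _ => abs_nonneg _)
  exact sum_range_le_mul_sum_range hmismatch_nonneg
    (sum_abs_occ_sub_le_sum_range hμ₁ hP hπ hπ') H
end

section
/- Let (π^t_*)_{t=1}^T be any sequence of Markov policies in a fixed MDP, and let (μ̄^t)_{t=1}^T be any sequence of feasible occupancy measures with induced policies π̄^t (so μ̄^t = μ^{π̄^t}). Then Σ_{t=1}^T Σ_{h=1}^H Σ_s μ̄^t_h(s) ‖π̄^t_h(·|s) − π^t_{*,h}(·|s)‖₁ ≤ sqrt( H·S·A·T · Σ_{t=1}^T ⟨R_{π^t_*}(μ̄^t), μ^{π^t_*} − μ̄^t⟩ ), where R_π is the steering reward R_π(μ) = −μᵀ(W^π−I)ᵀ(W^π−I). -/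
open Finset

noncomputable def Rpi {S A : Type*} [Fintype A] [DecidableEq A]
    (π : ℕ → S → A → ℝ) (μ : ℕ → S → A → ℝ) (h : ℕ) (s : S) (a : A) : ℝ :=
  - ∑ a', (π h s a' * (∑ b, μ h s b) - μ h s a') * (π h s a' - if a' = a then 1 else 0)

noncomputable def pibar {S A : Type*} [Fintype A] (μ : ℕ → S → A → ℝ) :
    ℕ → S → A → ℝ :=
  fun h s a => if (∑ b, μ h s b) = 0 then 1 / (Fintype.card A : ℝ) else μ h s a / (∑ b, μ h s b)

/-! Both occupancy measures factor at every `(t, h, s)` as state mass times policy, so the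
steering-reward pairing is, state by state, `μ̄(s)² ‖π̄(·|s) − π_*(·|s)‖₂²`. Cauchy–Schwarz over
the actions turns the `ℓ₁` distance into `√A` times the `ℓ₂` one, and Cauchy–Schwarz over the
`T·H·S` triples `(t, h, s)` gives the square-root bound. -/

lemma occ_eq_mul_sum {S A : Type*} [Fintype S] [Fintype A] (μ₁ : S → ℝ)
    (P : ℕ → S → A → S → ℝ) {π : ℕ → S → A → ℝ} (hπ : IsPolicy π) (h : ℕ) (s : S) (a : A) :
    occ μ₁ P π h s a = π h s a * ∑ b, occ μ₁ P π h s b := by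
  cases h with
  | zero => simp only [occ, ← Finset.mul_sum, (hπ 0 s).2]; ring
  | succ h => simp only [occ, ← Finset.sum_mul, (hπ (h + 1) s).2, one_mul]

/-- Holds also where the mass vanishes and `pibar` takes its uniform junk value. -/
lemma eq_pibar_mul_sum {S A : Type*} [Fintype A] {μ : ℕ → S → A → ℝ} {h : ℕ} {s : S}
    {c : A → ℝ} (hμ : ∀ a, μ h s a = c a * ∑ b, μ h s b) (a : A) :
    μ h s a = pibar μ h s a * ∑ b, μ h s b := by
  by_cases h0 : ∑ b, μ h s b = 0
  · rw [h0, mul_zero, hμ, h0, mul_zero]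
  · rw [pibar, if_neg h0, div_mul_cancel₀ _ h0]

lemma steering_reward_eq {A : Type*} [Fintype A] [DecidableEq A] (p q : A → ℝ) (m : ℝ) (a : A) :
    -∑ a', (p a' * m - q a' * m) * (p a' - if a' = a then 1 else 0)
      = m * ((p a - q a) - ∑ a', (p a' - q a') * p a') := by
  have expand : ∀ a', (p a' * m - q a' * m) * (p a' - if a' = a then 1 else 0)
      = m * ((p a' - q a') * p a') - if a' = a then m * (p a' - q a') else 0 := fun a' => by
    split_ifs <;> ring
  rw [Finset.sum_congr rfl fun a' _ => expand a', Finset.sum_sub_distrib, ← Finset.mul_sum,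
    Finset.sum_ite_eq' Finset.univ a, if_pos (Finset.mem_univ a)]
  ring

/-- `Rpi π μ h s` paired with `μ^π − μ` at a state where `μ h s = m • q` and
`μ^π h s = n • p`. -/
lemma sum_steering_reward_mul_sub {A : Type*} [Fintype A] [DecidableEq A] (p q : A → ℝ) (m n : ℝ)
    (hp : ∑ a, p a = 1) (hq : (∑ a, q a) * m = m) :
    ∑ a, (-∑ a', (p a' * m - q a' * m) * (p a' - if a' = a then 1 else 0)) *
        (p a * n - q a * m)
      = m ^ 2 * ∑ a, (q a - p a) ^ 2 := by
  set c := ∑ a', (p a' - q a') * p a'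
  have hq' : ∑ a, (p a - q a) * q a = c - ∑ a, (q a - p a) ^ 2 := by
    rw [← Finset.sum_sub_distrib]
    exact Finset.sum_congr rfl fun a _ => by ring
  have expand : ∀ a, m * ((p a - q a) - c) * (p a * n - q a * m)
      = m * n * ((p a - q a) * p a) - m ^ 2 * ((p a - q a) * q a)
        - m * c * n * p a + m * c * m * q a := fun a => by ring
  simp only [steering_reward_eq]
  rw [Finset.sum_congr rfl fun a _ => expand a, Finset.sum_add_distrib, Finset.sum_sub_distrib,
    Finset.sum_sub_distrib, ← Finset.mul_sum, ← Finset.mul_sum, ← Finset.mul_sum,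
    ← Finset.mul_sum, hq', hp]
  linear_combination (m * c) * hq

lemma sum_Rpi_mul_occ_sub {S A : Type*} [Fintype S] [Fintype A] [DecidableEq A]
    (μ₁ : S → ℝ) (P : ℕ → S → A → S → ℝ) {π ρ : ℕ → S → A → ℝ} (hπ : IsPolicy π)
    (hρ : IsPolicy ρ) (h : ℕ) (s : S) :
    ∑ a, Rpi π (occ μ₁ P ρ) h s a * (occ μ₁ P π h s a - occ μ₁ P ρ h s a)
      = (∑ a, occ μ₁ P ρ h s a) ^ 2 * ∑ a, (pibar (occ μ₁ P ρ) h s a - π h s a) ^ 2 := by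
  set μ := occ μ₁ P ρ
  have hμ : ∀ a, μ h s a = pibar μ h s a * ∑ b, μ h s b :=
    eq_pibar_mul_sum (occ_eq_mul_sum μ₁ P hρ h s)
  have hmass : (∑ a, pibar μ h s a) * ∑ b, μ h s b = ∑ b, μ h s b := by
    rw [Finset.sum_mul]; exact Finset.sum_congr rfl fun a _ => (hμ a).symm
  rw [← sum_steering_reward_mul_sub (π h s) (pibar μ h s) _ (∑ a, occ μ₁ P π h s a)
    (hπ h s).2 hmass]
  refine Finset.sum_congr rfl fun a _ => ?_
  rw [Rpi, occ_eq_mul_sum μ₁ P hπ h s a]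
  simp only [← hμ]

lemma sq_sum_sum_sum_le {ι κ τ : Type*} (s : Finset ι) (t : Finset κ) (u : Finset τ)
    (f : ι → κ → τ → ℝ) :
    (∑ i ∈ s, ∑ j ∈ t, ∑ k ∈ u, f i j k) ^ 2
      ≤ (#s * #t * #u : ℝ) * ∑ i ∈ s, ∑ j ∈ t, ∑ k ∈ u, f i j k ^ 2 := by
  simp only [← Finset.sum_product' (s := t), ← Finset.sum_product' (s := s)]
  have := sq_sum_le_card_mul_sum_sq (s := s ×ˢ (t ×ˢ u)) (f := fun x => f x.1 x.2.1 x.2.2)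
  simpa [Finset.card_product, mul_assoc] using this

lemma sq_mul_sum_abs_le {A : Type*} [Fintype A] (m : ℝ) (d : A → ℝ) :
    (m * ∑ a, |d a|) ^ 2 ≤ Fintype.card A * (m ^ 2 * ∑ a, d a ^ 2) := by
  have := sq_sum_le_card_mul_sum_sq (s := Finset.univ) (f := fun a => |d a|)
  simp only [sq_abs, Finset.card_univ] at this
  rw [mul_pow, mul_left_comm]
  exact mul_le_mul_of_nonneg_left this (sq_nonneg m)

theorem stmt6_general {S A : Type*} [Fintype S] [Fintype A] [DecidableEq A]
    (H T : ℕ) (μ₁ : S → ℝ)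
    (P : ℕ → S → A → S → ℝ)
    (πst : ℕ → ℕ → S → A → ℝ) (hπst : ∀ t, IsPolicy (πst t))
    (ρ : ℕ → ℕ → S → A → ℝ) (hρ : ∀ t, IsPolicy (ρ t))
    (μb : ℕ → ℕ → S → A → ℝ) (hμb : ∀ t, μb t = occ μ₁ P (ρ t)) :
    ∑ t ∈ Finset.range T, ∑ h ∈ Finset.range H, ∑ s,
        (∑ a, μb t h s a) * (∑ a, |pibar (μb t) h s a - πst t h s a|) ≤
      Real.sqrt ((H * Fintype.card S * Fintype.card A * T : ℝ) *
        ∑ t ∈ Finset.range T, ∑ h ∈ Finset.range H, ∑ s, ∑ a,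
          Rpi (πst t) (μb t) h s a * (occ μ₁ P (πst t) h s a - μb t h s a)) := by
  have reward : ∀ t h s, ∑ a, Rpi (πst t) (μb t) h s a * (occ μ₁ P (πst t) h s a - μb t h s a)
      = (∑ a, μb t h s a) ^ 2 * ∑ a, (pibar (μb t) h s a - πst t h s a) ^ 2 := fun t h s => by
    rw [hμb t]; exact sum_Rpi_mul_occ_sub μ₁ P (hπst t) (hρ t) h s
  simp only [reward]
  refine (le_abs_self _).trans (Real.abs_le_sqrt ?_)
  calc _ ≤ (T * H * Fintype.card S : ℝ) * ∑ t ∈ range T, ∑ h ∈ range H, ∑ s,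
          ((∑ a, μb t h s a) * ∑ a, |pibar (μb t) h s a - πst t h s a|) ^ 2 := by
        simpa using sq_sum_sum_sum_le (range T) (range H) univ _
    _ ≤ (T * H * Fintype.card S : ℝ) * ∑ t ∈ range T, ∑ h ∈ range H, ∑ s,
          Fintype.card A * ((∑ a, μb t h s a) ^ 2 *
            ∑ a, (pibar (μb t) h s a - πst t h s a) ^ 2) := by
        gcongr with t _ h _ s
        exact sq_mul_sum_abs_le _ _
    _ = _ := by simp only [← Finset.mul_sum]; ring

/-- for any sequence of target policies `π^t_*` and any sequence of feasible
occupancy measures `μ̄^t` (with induced policies `π̄^t`),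
`Σ_t Σ_h Σ_s μ̄^t_h(s)‖π̄^t_h(·|s) − π^t_{*,h}(·|s)‖₁ ≤
  sqrt(HSAT · Σ_t ⟨R_{π^t_*}(μ̄^t), μ^{π^t_*} − μ̄^t⟩)`. -/
theorem stmt6 {S A : Type*} [Fintype S] [Fintype A] [DecidableEq A]
    (H T : ℕ) (μ₁ : S → ℝ) (hμ₁ : IsProb μ₁)
    (P : ℕ → S → A → S → ℝ) (hP : IsKernel P)
    (πst : ℕ → ℕ → S → A → ℝ) (hπst : ∀ t, IsPolicy (πst t))
    (ρ : ℕ → ℕ → S → A → ℝ) (hρ : ∀ t, IsPolicy (ρ t))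
    (μb : ℕ → ℕ → S → A → ℝ) (hμb : ∀ t, μb t = occ μ₁ P (ρ t)) :
    ∑ t ∈ Finset.range T, ∑ h ∈ Finset.range H, ∑ s,
        (∑ a, μb t h s a) * (∑ a, |pibar (μb t) h s a - πst t h s a|) ≤
      Real.sqrt ((H * Fintype.card S * Fintype.card A * T : ℝ) *
        ∑ t ∈ Finset.range T, ∑ h ∈ Finset.range H, ∑ s, ∑ a,
          Rpi (πst t) (μb t) h s a * (occ μ₁ P (πst t) h s a - μb t h s a)) :=
  stmt6_general H T μ₁ P πst hπst ρ hρ μb hμb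
end
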